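/- arXiv:2603.08103 — 10 statements merged into one kernel-verified Lean document; each statement's English description precedes it below -/
import Mathlib

section
/- Let G be a commutative group with zero and let H be a submonoid of G with 0 ∈ H. Then the Riemann–Zariski space Zar(G|H) of all valuation submonoids of G containing H, endowed with the Zariski topology, is a spectral space. -/
/-! The sets `B(x)` generate the topology, and specialization is reverse inclusion. Every
intersection `⋂ x ∈ F, B(x)` is quasi-compact: an ultrafilter `𝒰` containing it converges to the
valuation monoid `{x | B(x) ∈ 𝒰}`, which is one because `B(x) ∪ B(x⁻¹)` is the whole space. So
finite intersections of the `B(x)` form a basis of compact opens that is closed under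
intersection. The generic point of an irreducible closed set `S` is the union of its members:
irreducibility makes it a monoid, and it lies in `S` since each of its basic neighbourhoods meets
`S`. -/

open Set Topology

/-- A topological space is spectral if it is quasi-compact, `T0`, sober (every nonempty
irreducible closed subset has a unique generic point), and its quasi-compact open subsets
form a basis of the topology that is closed under finite intersections. -/
def IsSpectralSpace (X : Type*) [TopologicalSpace X] : Prop :=
  CompactSpace X ∧ T0Space X ∧ QuasiSober X ∧
    TopologicalSpace.IsTopologicalBasis {U : Set X | IsOpen U ∧ IsCompact U} ∧
    ∀ U V : Set X, IsOpen U → IsCompact U → IsOpen V → IsCompact V → IsCompact (U ∩ V)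

variable (G : Type*) [CommGroupWithZero G]

/-- A valuation submonoid of a commutative group with zero `G`: a submonoid `V` with
`0 ∈ V` such that for every nonzero `x ∈ G`, either `x ∈ V` or `x⁻¹ ∈ V`. -/
def IsValSubmonoid (V : Submonoid G) : Prop :=
  (0 : G) ∈ V ∧ ∀ x : G, x ≠ 0 → (x ∈ V ∨ x⁻¹ ∈ V)

/-- The Riemann–Zariski space `Zar(G|H)`: all valuation submonoids of `G` containing `H`. -/
def Zar (H : Submonoid G) : Type _ :=
  {V : Submonoid G // IsValSubmonoid G V ∧ H ≤ V}

/-- The Zariski topology on `Zar(G|H)`, generated by the sets `B(x) = {S | x ∈ S}`. -/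
instance (H : Submonoid G) : TopologicalSpace (Zar G H) :=
  TopologicalSpace.generateFrom {B : Set (Zar G H) | ∃ x : G, B = {S | x ∈ S.1}}

namespace Zar

variable {G} {H : Submonoid G}

def basicOpen (x : G) : Set (Zar G H) := {V | x ∈ V.1}

lemma topologicalSpace_eq_generateFrom_basicOpen :
    (inferInstance : TopologicalSpace (Zar G H)) =
      TopologicalSpace.generateFrom (range (basicOpen (H := H))) := by
  refine congrArg TopologicalSpace.generateFrom (ext fun B => ?_)
  exact exists_congr fun _ => eq_comm

lemma isOpen_basicOpen (x : G) : IsOpen (basicOpen (H := H) x) :=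
  TopologicalSpace.isOpen_generateFrom_of_mem ⟨x, rfl⟩

lemma isTopologicalBasis_iInter_basicOpen :
    TopologicalSpace.IsTopologicalBasis
      (range fun F : Finset G => ⋂ x ∈ F, basicOpen (H := H) x) := by
  classical
  convert TopologicalSpace.isTopologicalBasis_of_subbasis
    topologicalSpace_eq_generateFrom_basicOpen
  ext U
  constructor
  · rintro ⟨F, rfl⟩
    refine ⟨↑(F.image (basicOpen (H := H))), ⟨Finset.finite_toSet _, ?_⟩, ?_⟩ <;> simp
  · rintro ⟨f, ⟨hfin, hsub⟩, rfl⟩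
    lift f to Finset (Set (Zar G H)) using hfin
    rw [← image_univ, Finset.subset_set_image_iff] at hsub
    obtain ⟨F, -, rfl⟩ := hsub
    exact ⟨F, by simp⟩

lemma le_nhds_iff {f : Filter (Zar G H)} {V : Zar G H} :
    f ≤ 𝓝 V ↔ ∀ x ∈ V.1, basicOpen x ∈ f := by
  change f ≤ @nhds _ (TopologicalSpace.generateFrom _) V ↔ _
  rw [TopologicalSpace.nhds_generateFrom]
  simp only [le_iInf_iff, Filter.le_principal_iff]
  exact ⟨fun h x hx => h _ ⟨hx, x, rfl⟩, by rintro h _ ⟨hV, x, rfl⟩; exact h x hV⟩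

lemma specializes_iff {V W : Zar G H} : V ⤳ W ↔ W.1 ≤ V.1 :=
  specializes_iff_nhds.trans <| le_nhds_iff.trans <|
    forall₂_congr fun x _ => (isOpen_basicOpen x).mem_nhds_iff

instance : T0Space (Zar G H) :=
  ⟨fun _ _ h => Subtype.ext <| le_antisymm (specializes_iff.1 h.specializes')
    (specializes_iff.1 h.specializes)⟩

def limit (𝒰 : Ultrafilter (Zar G H)) : Zar G H where
  val :=
    { carrier := {x | basicOpen x ∈ 𝒰}
      one_mem' := Filter.univ_mem' fun W => W.1.one_mem
      mul_mem' := fun ha hb =>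
        Filter.mem_of_superset (Filter.inter_mem ha hb) fun W hW => W.1.mul_mem hW.1 hW.2 }
  property :=
    ⟨⟨Filter.univ_mem' fun W => W.2.1.1, fun x hx =>
        𝒰.union_mem_iff.1 (Filter.univ_mem' fun W => W.2.1.2 x hx)⟩,
      fun _ hx => Filter.univ_mem' fun W => W.2.2 hx⟩

lemma le_nhds_limit (𝒰 : Ultrafilter (Zar G H)) : ↑𝒰 ≤ 𝓝 (limit 𝒰) :=
  le_nhds_iff.2 fun _ hx => hx

lemma isCompact_iInter_basicOpen (F : Set G) : IsCompact (⋂ x ∈ F, basicOpen (H := H) x) := by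
  refine isCompact_iff_ultrafilter_le_nhds.2 fun 𝒰 h𝒰 => ⟨limit 𝒰, ?_, le_nhds_limit 𝒰⟩
  exact mem_iInter₂.2 fun x hx =>
    Filter.mem_of_superset (Filter.le_principal_iff.1 h𝒰) (iInter₂_subset x hx)

def sup {S : Set (Zar G H)} (hS : IsIrreducible S) : Zar G H where
  val :=
    { carrier := {x | (S ∩ basicOpen x).Nonempty}
      one_mem' := let ⟨W, hW⟩ := hS.nonempty; ⟨W, hW, W.1.one_mem⟩
      mul_mem' := fun ha hb =>
        let ⟨W, hW, ha, hb⟩ :=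
          hS.isPreirreducible _ _ (isOpen_basicOpen _) (isOpen_basicOpen _) ha hb
        ⟨W, hW, W.1.mul_mem ha hb⟩ }
  property :=
    let ⟨W, hW⟩ := hS.nonempty
    ⟨⟨⟨W, hW, W.2.1.1⟩, fun x hx => (W.2.1.2 x hx).imp (⟨W, hW, ·⟩) (⟨W, hW, ·⟩)⟩,
      fun _ hx => ⟨W, hW, W.2.2 hx⟩⟩

lemma le_sup {S : Set (Zar G H)} (hS : IsIrreducible S) {W : Zar G H} (hW : W ∈ S) :
    W.1 ≤ (sup hS).1 :=
  fun _ hx => ⟨W, hW, hx⟩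

lemma sup_mem {S : Set (Zar G H)} (hS : IsIrreducible S) (hc : IsClosed S) : sup hS ∈ S := by
  classical
  refine hc.closure_subset (isTopologicalBasis_iInter_basicOpen.mem_closure_iff.2 ?_)
  rintro _ ⟨F, rfl⟩ hF
  have hF' : ∀ x ∈ F, (S ∩ basicOpen x).Nonempty := mem_iInter₂.1 hF
  simpa [inter_comm] using isIrreducible_iff_sInter.1 hS (F.image basicOpen)
    (by simp [isOpen_basicOpen]) (by simpa using hF')

lemma isGenericPoint_sup {S : Set (Zar G H)} (hS : IsIrreducible S) (hc : IsClosed S) :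
    IsGenericPoint (sup hS) S :=
  isGenericPoint_iff_specializes.2 fun _ =>
    ⟨fun h => h.mem_closed hc (sup_mem hS hc), fun h => specializes_iff.2 (le_sup hS h)⟩

instance : QuasiSober (Zar G H) :=
  ⟨fun hS hc => ⟨_, isGenericPoint_sup hS hc⟩⟩

instance : CompactSpace (Zar G H) :=
  ⟨by simpa using isCompact_iInter_basicOpen (H := H) ∅⟩

instance : PrespectralSpace (Zar G H) :=
  .of_isTopologicalBasis' isTopologicalBasis_iInter_basicOpen fun F => by
    simpa only [Finset.mem_coe] using isCompact_iInter_basicOpen (H := H) ↑F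

instance : QuasiSeparatedSpace (Zar G H) :=
  .of_isTopologicalBasis isTopologicalBasis_iInter_basicOpen fun F F' => by
    simpa only [biInter_union, Finset.mem_coe] using
      isCompact_iInter_basicOpen (H := H) (↑F ∪ ↑F')

instance : SpectralSpace (Zar G H) := {}

end Zar

theorem SpectralSpace.isSpectralSpace (X : Type*) [TopologicalSpace X] [SpectralSpace X] :
    IsSpectralSpace X :=
  ⟨inferInstance, inferInstance, inferInstance, PrespectralSpace.isTopologicalBasis,
    QuasiSeparatedSpace.inter_isCompact⟩

theorem zar_is_spectral (H : Submonoid G) :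
    IsSpectralSpace (Zar G H) :=
  SpectralSpace.isSpectralSpace _
end

section
/- Let 𝒰 be an ultrafilter on Zar(G|H). Then the set H_𝒰 := {x ∈ G : B(x) ∈ 𝒰} is a valuation submonoid of G containing H; in particular H_𝒰 ∈ Zar(G|H), and for every x ∈ G one has H_𝒰 ∈ B(x) if and only if B(x) ∈ 𝒰. -/
open Set Topology

variable (G : Type*) [CommGroupWithZero G]

/-!
Membership in `H_𝒰` is "eventually membership" along `𝒰`. For any filter this set is closed under
products and contains `H`, since every point of `Zar(G|H)` does; the valuation property is where
the ultrafilter enters: if `x ∉ H_𝒰`, then `𝒰` contains `{S | x ∉ S}`, and every `S` in that set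
contains `x⁻¹`.
-/

namespace Zar

variable {G} {H : Submonoid G}

def limSubmonoid (F : Filter (Zar G H)) : Submonoid G where
  carrier := {x | ∀ᶠ S in F, x ∈ S.1}
  one_mem' := Filter.Eventually.of_forall fun S => S.1.one_mem
  mul_mem' ha hb := (ha.and hb).mono fun S hS => S.1.mul_mem hS.1 hS.2

theorem le_limSubmonoid (F : Filter (Zar G H)) : H ≤ limSubmonoid F :=
  fun _ hx => Filter.Eventually.of_forall fun S => S.2.2 hx

theorem isValSubmonoid_limSubmonoid (𝒰 : Ultrafilter (Zar G H)) :
    IsValSubmonoid G (limSubmonoid (𝒰 : Filter (Zar G H))) := by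
  refine ⟨Filter.Eventually.of_forall fun S => S.2.1.1, fun x hx => ?_⟩
  refine (𝒰.em fun S => x ∈ S.1).imp id fun h_not_mem => ?_
  exact h_not_mem.mono fun S hS => (S.2.1.2 x hx).resolve_left hS

def ofUltrafilter (𝒰 : Ultrafilter (Zar G H)) : Zar G H :=
  ⟨limSubmonoid (𝒰 : Filter (Zar G H)), isValSubmonoid_limSubmonoid 𝒰, le_limSubmonoid _⟩

end Zar

theorem ultrafilter_limit_mem_zar (H : Submonoid G)
    (𝒰 : Ultrafilter (Zar G H)) :
    ∃ V : Submonoid G,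
      (V : Set G) = {x : G | {S : Zar G H | x ∈ S.1} ∈ 𝒰} ∧
      IsValSubmonoid G V ∧ H ≤ V ∧
      ∃ W : Zar G H, W.1 = V ∧
        ∀ x : G, (x ∈ W.1 ↔ {S : Zar G H | x ∈ S.1} ∈ 𝒰) :=
  ⟨Zar.limSubmonoid (𝒰 : Filter (Zar G H)), rfl, Zar.isValSubmonoid_limSubmonoid 𝒰,
    Zar.le_limSubmonoid _,
    Zar.ofUltrafilter 𝒰, rfl, fun _ => Iff.rfl⟩
end

section
/- Let H be a cancellative commutative monoid with zero (1 ≠ 0) and let G be its quotient groupoid. For every S ∈ Zar(G|H), the set δ(S) := m_S ∩ H is a prime s-ideal of H, and the resulting domination map δ : Zar(G|H) → s-spec(H) is continuous and surjective, where both spaces carry their Zariski topologies. -/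
open Set Topology

variable (G : Type*) [CommGroupWithZero G]

/-- `G` is the quotient groupoid of `H`: every element of `G` has the form `a * b⁻¹`
with `a, b ∈ H`, `b ≠ 0`. -/
def IsQuotientGroupoid (H : Submonoid G) : Prop :=
  ∀ g : G, ∃ a ∈ H, ∃ b ∈ H, b ≠ 0 ∧ g = a * b⁻¹

/-- The set of non-invertible elements of a submonoid `S` of `G`. -/
def mIdeal (S : Submonoid G) : Set G := {x : G | x ∈ S ∧ ¬∃ y ∈ S, x * y = 1}

/-- A prime `s`-ideal of `H`: a proper subset `P ⊊ H` with `0 ∈ P`, `P·H ⊆ P`, and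
`a * b ∈ P` implies `a ∈ P` or `b ∈ P` for all `a, b ∈ H`. -/
def IsPrimeSIdeal (H : Submonoid G) (P : Set G) : Prop :=
  P ⊆ (H : Set G) ∧ P ≠ (H : Set G) ∧ (0 : G) ∈ P ∧
    (∀ p ∈ P, ∀ h ∈ H, p * h ∈ P) ∧
    (∀ a ∈ H, ∀ b ∈ H, a * b ∈ P → a ∈ P ∨ b ∈ P)

/-- The prime `s`-spectrum of `H`. -/
def sSpec (H : Submonoid G) : Type _ :=
  {P : Set G // IsPrimeSIdeal G H P}

/-- The Zariski topology on `s`-spec(`H`), generated by the sets `D_s(f) = {P | f ∉ P}`. -/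
instance (H : Submonoid G) : TopologicalSpace (sSpec G H) :=
  TopologicalSpace.generateFrom
    {D : Set (sSpec G H) | ∃ f ∈ H, D = {P | f ∉ P.1}}
/-!
The non-units `m_S` of any submonoid `S ⊇ H` form a prime ideal of `S`, so `m_S ∩ H` is a prime
`s`-ideal. The preimage of `D_s(f)` is `⋃_{f y = 1} B(y)`, hence open.

Surjectivity is Chevalley's extension argument. Given a prime `s`-ideal `P`, take `V` maximal
among the submonoids containing the localization `H_P` and no `p⁻¹` with `0 ≠ p ∈ P`. If
`x, x⁻¹ ∉ V`, maximality gives `p⁻¹ = v xⁿ` and `q⁻¹ = w x⁻ᵐ` with `n, m ≥ 1`, whence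
`(pᵐ qⁿ)⁻¹ = vᵐ wⁿ ∈ V`, a contradiction; so `V` is a valuation monoid, and `m_V ∩ H = P`.
-/

section

variable {G}

theorem mem_mIdeal_iff_of_ne_zero {S : Submonoid G} {x : G} (hx : x ≠ 0) :
    x ∈ mIdeal G S ↔ x ∈ S ∧ x⁻¹ ∉ S := by
  refine and_congr_right fun _ => not_congr ⟨?_, fun h => ⟨x⁻¹, h, mul_inv_cancel₀ hx⟩⟩
  rintro ⟨y, hy, hxy⟩
  rwa [inv_eq_of_mul_eq_one_right hxy]

theorem notMem_mIdeal_iff {S : Submonoid G} {x : G} (hx : x ∈ S) :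
    x ∉ mIdeal G S ↔ ∃ y ∈ S, x * y = 1 := by
  simp [mIdeal, hx]

theorem zero_mem_mIdeal {S : Submonoid G} (h0 : (0 : G) ∈ S) : (0 : G) ∈ mIdeal G S :=
  ⟨h0, fun ⟨y, _, hy⟩ => zero_ne_one (by rwa [zero_mul] at hy)⟩

theorem one_notMem_mIdeal (S : Submonoid G) : (1 : G) ∉ mIdeal G S :=
  fun h => h.2 ⟨1, S.one_mem, one_mul 1⟩

theorem mul_mem_mIdeal {S : Submonoid G} {p s : G} (hp : p ∈ mIdeal G S) (hs : s ∈ S) :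
    p * s ∈ mIdeal G S :=
  ⟨S.mul_mem hp.1 hs, fun ⟨y, hy, hpy⟩ => hp.2 ⟨s * y, S.mul_mem hs hy, by rwa [← mul_assoc]⟩⟩

theorem mem_mIdeal_or_mem_mIdeal_of_mul_mem {S : Submonoid G} {a b : G} (ha : a ∈ S)
    (hb : b ∈ S) (hab : a * b ∈ mIdeal G S) : a ∈ mIdeal G S ∨ b ∈ mIdeal G S := by
  by_contra! h
  obtain ⟨y, hy, hay⟩ := (notMem_mIdeal_iff ha).1 h.1
  obtain ⟨z, hz, hbz⟩ := (notMem_mIdeal_iff hb).1 h.2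
  exact hab.2 ⟨y * z, S.mul_mem hy hz, by rw [mul_mul_mul_comm, hay, hbz, one_mul]⟩

theorem isPrimeSIdeal_mIdeal_inter {H S : Submonoid G} (h0 : (0 : G) ∈ H) (hHS : H ≤ S) :
    IsPrimeSIdeal G H (mIdeal G S ∩ H) := by
  refine ⟨inter_subset_right, fun h => ?_, ⟨zero_mem_mIdeal (hHS h0), h0⟩, ?_, ?_⟩
  · exact one_notMem_mIdeal S (h.symm.subset H.one_mem).1
  · rintro p ⟨hp, hpH⟩ h hh
    exact ⟨mul_mem_mIdeal hp (hHS hh), H.mul_mem hpH hh⟩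
  · rintro a ha b hb ⟨hab, -⟩
    exact (mem_mIdeal_or_mem_mIdeal_of_mul_mem (hHS ha) (hHS hb) hab).imp (⟨·, ha⟩) (⟨·, hb⟩)

section ValuationExtension

variable {A : Submonoid G} {X : Set G}

theorem exists_inv_eq_mul_pow_succ_of_notMem {V : Submonoid G}
    (hV : Maximal (fun W : Submonoid G => A ≤ W ∧ ∀ x ∈ X, x⁻¹ ∉ W) V) {z : G} (hz : z ∉ V) :
    ∃ p ∈ X, ∃ v ∈ V, ∃ n : ℕ, p⁻¹ = v * z ^ (n + 1) := by
  obtain ⟨p, hp, hpinv⟩ : ∃ p ∈ X, p⁻¹ ∈ V ⊔ Submonoid.powers z := by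
    by_contra! h
    exact hz (hV.2 ⟨hV.1.1.trans le_sup_left, h⟩ le_sup_left
      (Submonoid.mem_sup_right (Submonoid.mem_powers z)))
  obtain ⟨v, hv, _, ⟨k, rfl⟩, hvk⟩ := Submonoid.mem_sup.1 hpinv
  beta_reduce at hvk
  cases k with
  | zero => exact (hV.1.2 p hp (by rwa [← hvk, pow_zero, mul_one])).elim
  | succ n => exact ⟨p, hp, v, hv, n, hvk.symm⟩

theorem mem_or_inv_mem_of_maximal (hX : ∀ x ∈ X, ∀ y ∈ X, x * y ∈ X) {V : Submonoid G}
    (hV : Maximal (fun W : Submonoid G => A ≤ W ∧ ∀ x ∈ X, x⁻¹ ∉ W) V) {x : G} (hx : x ≠ 0) :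
    x ∈ V ∨ x⁻¹ ∈ V := by
  by_contra! h
  obtain ⟨p, hp, v, hv, n, hpv⟩ := exists_inv_eq_mul_pow_succ_of_notMem hV h.1
  obtain ⟨q, hq, w, hw, m, hqw⟩ := exists_inv_eq_mul_pow_succ_of_notMem hV h.2
  have hpow : ∀ {r : G}, r ∈ X → ∀ k : ℕ, r ^ (k + 1) ∈ X := by
    intro r hr k
    induction k with
    | zero => simpa using hr
    | succ k ih => exact pow_succ r (k + 1) ▸ hX _ ih _ hr
  have hinv : (p ^ (m + 1) * q ^ (n + 1))⁻¹ = v ^ (m + 1) * w ^ (n + 1) := by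
    rw [mul_inv, ← inv_pow, ← inv_pow, hpv, hqw, mul_pow, mul_pow, ← pow_mul, ← pow_mul, inv_pow,
      mul_comm (m + 1), mul_mul_mul_comm, mul_inv_cancel₀ (pow_ne_zero _ hx), mul_one]
  exact hV.1.2 _ (hX _ (hpow hp m) _ (hpow hq n))
    (hinv ▸ V.mul_mem (V.pow_mem hv _) (V.pow_mem hw _))

theorem exists_le_valuation_avoiding_inv (hX : ∀ x ∈ X, ∀ y ∈ X, x * y ∈ X)
    (hA : ∀ x ∈ X, x⁻¹ ∉ A) :
    ∃ V : Submonoid G, A ≤ V ∧ (∀ x ∈ X, x⁻¹ ∉ V) ∧ ∀ x : G, x ≠ 0 → x ∈ V ∨ x⁻¹ ∈ V := by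
  obtain ⟨V, -, hV⟩ := zorn_le_nonempty₀ {W : Submonoid G | A ≤ W ∧ ∀ x ∈ X, x⁻¹ ∉ W}
    (fun c hcs hc W hW => by
      have hdir : DirectedOn (· ≤ ·) c := hc.directedOn
      refine ⟨sSup c, ⟨(hcs hW).1.trans (le_sSup hW), fun x hx hxc => ?_⟩, fun _ => le_sSup⟩
      obtain ⟨W', hW'c, hxW'⟩ := (Submonoid.mem_sSup_of_directedOn ⟨W, hW⟩ hdir).1 hxc
      exact (hcs hW'c).2 x hx hxW') A ⟨le_rfl, hA⟩
  exact ⟨V, hV.1.1, hV.1.2, fun x => mem_or_inv_mem_of_maximal hX hV⟩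

end ValuationExtension

section Localization

variable {H : Submonoid G} {P : Set G}

theorem IsPrimeSIdeal.one_notMem (hP : IsPrimeSIdeal G H P) : (1 : G) ∉ P := fun h1 =>
  hP.2.1 (hP.1.antisymm fun h hh => by simpa using hP.2.2.2.1 1 h1 h hh)

theorem IsPrimeSIdeal.mul_mem_of_ne_zero (hP : IsPrimeSIdeal G H P) {p q : G}
    (hp : p ∈ P \ {0}) (hq : q ∈ P \ {0}) : p * q ∈ P \ {0} :=
  ⟨hP.2.2.2.1 p hp.1 q (hP.1 hq.1), mul_ne_zero hp.2 hq.2⟩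

def IsPrimeSIdeal.compl (hP : IsPrimeSIdeal G H P) : Submonoid G where
  carrier := (H : Set G) \ P
  one_mem' := ⟨H.one_mem, hP.one_notMem⟩
  mul_mem' := fun ⟨ha, haP⟩ ⟨hb, hbP⟩ =>
    ⟨H.mul_mem ha hb, fun h => (hP.2.2.2.2 _ ha _ hb h).elim haP hbP⟩

/-- The localization `H_P = {a t⁻¹ | a ∈ H, t ∈ H \ P}`. -/
def IsPrimeSIdeal.localization (hP : IsPrimeSIdeal G H P) : Submonoid G :=
  H ⊔ hP.compl.map invMonoidHom

theorem IsPrimeSIdeal.le_localization (hP : IsPrimeSIdeal G H P) : H ≤ hP.localization :=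
  le_sup_left

theorem IsPrimeSIdeal.inv_mem_localization (hP : IsPrimeSIdeal G H P) {t : G} (ht : t ∈ H)
    (htP : t ∉ P) : t⁻¹ ∈ hP.localization :=
  Submonoid.mem_sup_right (Submonoid.mem_map_of_mem invMonoidHom (⟨ht, htP⟩ : t ∈ hP.compl))

theorem IsPrimeSIdeal.inv_notMem_localization (hP : IsPrimeSIdeal G H P) {p : G}
    (hp : p ∈ P \ {0}) : p⁻¹ ∉ hP.localization := by
  intro hmem
  obtain ⟨a, ha, _, ⟨t, ⟨ht, htP⟩, rfl⟩, hat⟩ := Submonoid.mem_sup.1 hmem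
  have ht0 : t ≠ 0 := fun h => htP (h ▸ hP.2.2.1)
  have htpa : t = p * a := by
    rw [invMonoidHom_apply, mul_inv_eq_iff_eq_mul₀ ht0] at hat
    rw [hat, ← mul_assoc, mul_inv_cancel₀ hp.2, one_mul]
  exact htP (htpa ▸ hP.2.2.2.1 p hp.1 a ha)

end Localization

def dominationMap {H : Submonoid G} (h0 : (0 : G) ∈ H) (S : Zar G H) : sSpec G H :=
  ⟨mIdeal G S.1 ∩ H, isPrimeSIdeal_mIdeal_inter h0 S.2.2⟩

theorem notMem_dominationMap_iff {H : Submonoid G} (h0 : (0 : G) ∈ H) {f : G} (hf : f ∈ H)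
    (S : Zar G H) : f ∉ (dominationMap h0 S).1 ↔ ∃ y ∈ S.1, f * y = 1 := by
  simp only [dominationMap, mem_inter_iff, SetLike.mem_coe, hf, and_true]
  exact notMem_mIdeal_iff (S.2.2 hf)

theorem continuous_dominationMap {H : Submonoid G} (h0 : (0 : G) ∈ H) :
    Continuous (dominationMap h0) := by
  refine continuous_generateFrom_iff.2 ?_
  rintro D ⟨f, hf, rfl⟩
  have hpre : dominationMap h0 ⁻¹' {P | f ∉ P.1} = ⋃ y ∈ {y : G | f * y = 1}, {S | y ∈ S.1} := by
    ext S
    simp only [mem_preimage, mem_ofPred_eq, notMem_dominationMap_iff h0 hf, mem_iUnion, exists_prop]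
    exact exists_congr fun y => and_comm
  rw [hpre]
  exact isOpen_biUnion fun y _ => TopologicalSpace.isOpen_generateFrom_of_mem ⟨y, rfl⟩

theorem dominationMap_surjective {H : Submonoid G} (h0 : (0 : G) ∈ H) :
    Function.Surjective (dominationMap h0) := by
  rintro ⟨P, hP⟩
  obtain ⟨V, hLV, hVP, hval⟩ := exists_le_valuation_avoiding_inv
    (fun _ hp _ hq => hP.mul_mem_of_ne_zero hp hq) fun _ => hP.inv_notMem_localization
  have hHV : H ≤ V := hP.le_localization.trans hLV
  refine ⟨⟨V, ⟨hHV h0, hval⟩, hHV⟩, Subtype.ext <| Set.ext fun h => ⟨?_, fun hp => ⟨?_, hP.1 hp⟩⟩⟩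
  · rintro ⟨hm, hH⟩
    by_contra hhP
    have hh0 : h ≠ 0 := fun h' => hhP (h' ▸ hP.2.2.1)
    exact ((mem_mIdeal_iff_of_ne_zero hh0).1 hm).2 (hLV (hP.inv_mem_localization hH hhP))
  · rcases eq_or_ne h 0 with rfl | hh0
    · exact zero_mem_mIdeal (hHV h0)
    · exact (mem_mIdeal_iff_of_ne_zero hh0).2 ⟨hHV (hP.1 hp), hVP h ⟨hp, hh0⟩⟩

end

theorem domination_map_continuous_surjective (H : Submonoid G) (h0 : (0 : G) ∈ H) :
    (∀ S : Zar G H, IsPrimeSIdeal G H (mIdeal G S.1 ∩ (H : Set G))) ∧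
    ∃ δ : Zar G H → sSpec G H,
      (∀ S : Zar G H, (δ S).1 = mIdeal G S.1 ∩ (H : Set G)) ∧
      Continuous δ ∧ Function.Surjective δ :=
  ⟨fun S => isPrimeSIdeal_mIdeal_inter h0 S.2.2, dominationMap h0, fun _ => rfl,
    continuous_dominationMap h0, dominationMap_surjective h0⟩
end

section
/- Let H be a cancellative commutative monoid with zero (1 ≠ 0) with quotient groupoid G, assume H is an s-Prüfer monoid, and let δ : Zar(G|H) → s-spec(H) be the domination map. Then for every x ∈ G, δ(B(x)) = s-spec(H) \ V_s((H : x)), where (H : x) = {h ∈ H : h·x ∈ H} and V_s(X) = {P ∈ s-spec(H) : X ⊆ P}. That is, a prime s-ideal P lies in δ(B(x)) if and only if (H : x) ⊄ P. -/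
open Set Topology

variable (G : Type*) [CommGroupWithZero G]

/-- A fractional `s`-ideal of `H`: a subset `I ⊆ G` with `0 ∈ I`, `I·H = I`, and
`c·I ⊆ H` for some nonzero `c ∈ H`. -/
def IsFractionalSIdeal (H : Submonoid G) (I : Set G) : Prop :=
  (0 : G) ∈ I ∧ Set.image2 (· * ·) I (H : Set G) = I ∧
    ∃ c ∈ H, c ≠ 0 ∧ (fun x => c * x) '' I ⊆ (H : Set G)

/-- `I` is `s`-finitely generated: `I = E·H ∪ {0}` for some finite `E ⊆ G`. -/
def IsSFinitelyGenerated (H : Submonoid G) (I : Set G) : Prop :=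
  ∃ E : Set G, E.Finite ∧ I = Set.image2 (· * ·) E (H : Set G) ∪ {0}

/-- `I` is `s`-invertible: `I·J = H` for some fractional `s`-ideal `J`. -/
def IsSInvertible (H : Submonoid G) (I : Set G) : Prop :=
  ∃ J : Set G, IsFractionalSIdeal G H J ∧ Set.image2 (· * ·) I J = (H : Set G)

/-- `H` is an `s`-Prüfer monoid: every `s`-finitely generated fractional `s`-ideal
other than `{0}` is `s`-invertible. -/
def IsSPrufer (H : Submonoid G) : Prop :=
  ∀ I : Set G, IsFractionalSIdeal G H I → IsSFinitelyGenerated G H I → I ≠ {0} →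
    IsSInvertible G H I

/-!
For s-ideals the Prüfer property is very strong: if `(a, b)` is s-invertible, then
`1 = (e * h) * j` with `e ∈ {a, b}`, `h ∈ H` and `j` in the inverse, so `e⁻¹ = h * j` and the other
generator is an `H`-multiple of `e`. Hence `H` is itself a valuation monoid of `G`.

Then if `x ∈ S ∈ Zar(G|H)`, either `x ∈ H` or `x⁻¹ ∈ H`, and accordingly `1` or `x⁻¹` is an element
of `(H : x)` that is a unit of `S`, hence not in `δ(S)`. Conversely, if `h ∈ (H : x) \ P`, the
localization `H_P = {a * b⁻¹ | a ∈ H, b ∈ H \ P}` contains `H`, so is a valuation monoid; it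
contains `x = (h * x) * h⁻¹`, and `δ(H_P) = P`.
-/

section Domination

variable {G}

theorem IsValSubmonoid.mem_or_inv_mem {V : Submonoid G} (hV : IsValSubmonoid G V) (x : G) :
    x ∈ V ∨ x⁻¹ ∈ V := by
  rcases eq_or_ne x 0 with rfl | hx
  · exact Or.inl hV.1
  · exact hV.2 x hx

theorem IsValSubmonoid.of_le {V W : Submonoid G} (hV : IsValSubmonoid G V) (hVW : V ≤ W) :
    IsValSubmonoid G W :=
  ⟨hVW hV.1, fun x _ => (hV.mem_or_inv_mem x).imp (@hVW x) (@hVW x⁻¹)⟩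

theorem notMem_mIdeal_of_mul_eq_one {S : Submonoid G} {x y : G} (hy : y ∈ S) (hxy : x * y = 1) :
    x ∉ mIdeal G S :=
  fun hx => hx.2 ⟨y, hy, hxy⟩

section SPrufer

variable (H : Submonoid G)

def sSpan (E : Set G) : Set G :=
  image2 (· * ·) E H ∪ {0}

variable {H}

theorem subset_sSpan (E : Set G) : E ⊆ sSpan H E :=
  fun e he => Or.inl ⟨e, he, 1, H.one_mem, mul_one e⟩

theorem sSpan_subset (h0 : (0 : G) ∈ H) {E : Set G} (hE : E ⊆ H) : sSpan H E ⊆ H := by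
  rintro _ (⟨e, he, h, hh, rfl⟩ | rfl)
  exacts [H.mul_mem (hE he) hh, h0]

theorem isFractionalSIdeal_sSpan (h0 : (0 : G) ∈ H) {E : Set G} (hE : E ⊆ H) :
    IsFractionalSIdeal G H (sSpan H E) := by
  refine ⟨Or.inr rfl, ?_, 1, H.one_mem, one_ne_zero, ?_⟩
  · refine subset_antisymm ?_ fun z hz => ⟨z, hz, 1, H.one_mem, mul_one z⟩
    rintro _ ⟨_, ⟨e, he, h', hh', rfl⟩ | rfl, h, hh, rfl⟩
    · exact Or.inl ⟨e, he, h' * h, H.mul_mem hh' hh, (mul_assoc e h' h).symm⟩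
    · exact Or.inr (zero_mul h)
  · simpa only [one_mul, image_id'] using sSpan_subset h0 hE

theorem sSpan_ne_singleton_zero {E : Set G} {e : G} (he : e ∈ E) (he0 : e ≠ 0) :
    sSpan H E ≠ {0} :=
  fun h => he0 (by simpa [h] using subset_sSpan (H := H) E he)

theorem IsSInvertible.exists_forall_mul_inv_mem {E : Set G} (hE : IsSInvertible G H (sSpan H E)) :
    ∃ e ∈ E, ∀ e' ∈ E, e' * e⁻¹ ∈ H := by
  obtain ⟨J, -, hIJ⟩ := hE
  have hmul : ∀ i ∈ sSpan H E, ∀ j ∈ J, i * j ∈ H :=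
    fun i hi j hj => by rw [← SetLike.mem_coe, ← hIJ]; exact mem_image2_of_mem hi hj
  obtain ⟨i, hi, j, hj, hij⟩ : (1 : G) ∈ image2 (· * ·) (sSpan H E) J := hIJ ▸ H.one_mem
  rcases hi with ⟨e, he, h, hh, rfl⟩ | rfl
  · have he_inv : e⁻¹ = h * j := inv_eq_of_mul_eq_one_right (by rw [← mul_assoc]; exact hij)
    refine ⟨e, he, fun e' he' => ?_⟩
    rw [he_inv, mul_left_comm, mul_comm]
    exact H.mul_mem (hmul e' (subset_sSpan E he') j hj) hh
  · exact absurd hij (by simp)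

theorem IsSPrufer.isValSubmonoid (h0 : (0 : G) ∈ H) (hq : IsQuotientGroupoid G H)
    (hpruf : IsSPrufer G H) : IsValSubmonoid G H := by
  refine ⟨h0, fun x hx => ?_⟩
  obtain ⟨a, ha, b, hb, -, rfl⟩ := hq x
  have ha0 : a ≠ 0 := by rintro rfl; exact hx (zero_mul _)
  have hE : ({a, b} : Set G) ⊆ H := pair_subset ha hb
  obtain ⟨e, he, hdiv⟩ := IsSInvertible.exists_forall_mul_inv_mem <|
    hpruf _ (isFractionalSIdeal_sSpan h0 hE) ⟨_, toFinite _, rfl⟩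
      (sSpan_ne_singleton_zero (mem_insert a {b}) ha0)
  rcases he with rfl | rfl
  · exact Or.inr (by simpa only [mul_inv, inv_inv, mul_comm] using hdiv b (mem_insert_of_mem _ rfl))
  · exact Or.inl (hdiv a (mem_insert _ _))

end SPrufer

namespace IsPrimeSIdeal

variable {H : Submonoid G} {P : Set G}

theorem one_notMem_s6 (hP : IsPrimeSIdeal G H P) : (1 : G) ∉ P :=
  fun h1 => hP.2.1 <| subset_antisymm hP.1 fun z hz => by simpa using hP.2.2.2.1 1 h1 z hz

theorem ne_zero_of_notMem (hP : IsPrimeSIdeal G H P) {b : G} (hb : b ∉ P) : b ≠ 0 :=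
  fun h => hb (h ▸ hP.2.2.1)

theorem mul_notMem (hP : IsPrimeSIdeal G H P) {a b : G} (ha : a ∈ H) (hb : b ∈ H) (haP : a ∉ P)
    (hbP : b ∉ P) : a * b ∉ P :=
  fun hab => (hP.2.2.2.2 a ha b hb hab).elim haP hbP

def localization_s6 (hP : IsPrimeSIdeal G H P) : Submonoid G where
  carrier := {g | ∃ a ∈ H, ∃ b ∈ H, b ∉ P ∧ g = a * b⁻¹}
  mul_mem' := by
    rintro _ _ ⟨a, ha, b, hb, hbP, rfl⟩ ⟨a', ha', b', hb', hbP', rfl⟩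
    exact ⟨a * a', H.mul_mem ha ha', b * b', H.mul_mem hb hb', hP.mul_notMem hb hb' hbP hbP',
      by rw [mul_inv, mul_mul_mul_comm]⟩
  one_mem' := ⟨1, H.one_mem, 1, H.one_mem, hP.one_notMem_s6, by simp⟩

theorem mul_inv_mem_localization (hP : IsPrimeSIdeal G H P) {a b : G} (ha : a ∈ H) (hb : b ∈ H)
    (hbP : b ∉ P) : a * b⁻¹ ∈ hP.localization_s6 :=
  ⟨a, ha, b, hb, hbP, rfl⟩

theorem le_localization_s6 (hP : IsPrimeSIdeal G H P) : H ≤ hP.localization_s6 :=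
  fun g hg => by simpa using hP.mul_inv_mem_localization hg H.one_mem hP.one_notMem_s6

theorem mem_localization_of_mul_mem (hP : IsPrimeSIdeal G H P) {h x : G} (hh : h ∈ H)
    (hhP : h ∉ P) (hhx : h * x ∈ H) : x ∈ hP.localization_s6 := by
  simpa [mul_comm h x, mul_assoc, hP.ne_zero_of_notMem hhP] using
    hP.mul_inv_mem_localization hhx hh hhP

theorem mIdeal_localization_inter (hP : IsPrimeSIdeal G H P) :
    mIdeal G hP.localization_s6 ∩ H = P := by
  ext g
  constructor
  · rintro ⟨hgm, hgH⟩
    by_contra hgP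
    refine notMem_mIdeal_of_mul_eq_one ?_ (mul_inv_cancel₀ (hP.ne_zero_of_notMem hgP)) hgm
    simpa using hP.mul_inv_mem_localization H.one_mem hgH hgP
  · intro hgP
    have hgH := hP.1 hgP
    refine ⟨⟨hP.le_localization_s6 hgH, ?_⟩, hgH⟩
    rintro ⟨_, ⟨a, ha, b, hb, hbP, rfl⟩, hgab⟩
    have hga : g * a = b := by
      rw [← mul_assoc] at hgab
      exact (mul_inv_eq_one₀ (hP.ne_zero_of_notMem hbP)).mp hgab
    exact hbP (hga ▸ hP.2.2.2.1 g hgP a ha)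

end IsPrimeSIdeal

theorem IsValSubmonoid.exists_colon_notMem_mIdeal {H S : Submonoid G} (hH : IsValSubmonoid G H)
    {x : G} (hx : x ∈ S) : ∃ h ∈ H, h * x ∈ H ∧ h ∉ mIdeal G S := by
  rcases hH.mem_or_inv_mem x with hxH | hxH
  · exact ⟨1, H.one_mem, by rwa [one_mul], notMem_mIdeal_of_mul_eq_one S.one_mem (one_mul 1)⟩
  · rcases eq_or_ne x 0 with rfl | hx0
    · exact ⟨1, H.one_mem, by rwa [one_mul, ← inv_zero],
        notMem_mIdeal_of_mul_eq_one S.one_mem (one_mul 1)⟩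
    · exact ⟨x⁻¹, hxH, by rw [inv_mul_cancel₀ hx0]; exact H.one_mem,
        notMem_mIdeal_of_mul_eq_one hx (inv_mul_cancel₀ hx0)⟩

end Domination

theorem image_of_basic_open_under_domination (H : Submonoid G) (h0 : (0 : G) ∈ H)
    (hq : IsQuotientGroupoid G H) (hpruf : IsSPrufer G H) (x : G) (P : sSpec G H) :
    (∃ S : Zar G H, x ∈ S.1 ∧ mIdeal G S.1 ∩ (H : Set G) = P.1) ↔
      ¬({h : G | h ∈ H ∧ h * x ∈ H} ⊆ P.1) := by
  have hH : IsValSubmonoid G H := hpruf.isValSubmonoid h0 hq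
  constructor
  · rintro ⟨S, hxS, hSP⟩
    obtain ⟨h, hh, hhx, hhS⟩ := hH.exists_colon_notMem_mIdeal hxS
    exact fun hsub => hhS (hSP ▸ hsub ⟨hh, hhx⟩).1
  · intro hsub
    obtain ⟨h, ⟨hh, hhx⟩, hhP⟩ := not_subset.mp hsub
    have hP := P.2
    exact ⟨⟨hP.localization_s6, hH.of_le hP.le_localization_s6, hP.le_localization_s6⟩,
      hP.mem_localization_of_mul_mem hh hhP hhx, hP.mIdeal_localization_inter⟩
end

section
/- Let H be a cancellative commutative monoid with zero (1 ≠ 0), let r be a finitary ideal system on H, and let 𝒰 be an ultrafilter on I_r(H). Then the set I_𝒰 := {y ∈ H : U_r(y) ∉ 𝒰} is an r-ideal of H, i.e. (I_𝒰)_r = I_𝒰. -/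
open Set Topology

/-- An ideal system on a cancellative commutative monoid with zero `H`. -/
structure IdealSystem (H : Type*) [CommMonoidWithZero H] [IsCancelMulZero H] where
  toFun : Set H → Set H
  id1 : ∀ X : Set H, X ∪ {0} ⊆ toFun X
  id2 : ∀ X Y : Set H, X ⊆ toFun Y → toFun X ⊆ toFun Y
  id3 : ∀ (c : H) (X : Set H), (fun x => c * x) '' toFun X = toFun ((fun x => c * x) '' X)
  id4 : ∀ c y : H, c * y ∈ toFun {c}

/-- An ideal system is finitary if `X_r` is the union of `E_r` over finite subsets `E ⊆ X`. -/
def IdealSystem.Finitary {H : Type*} [CommMonoidWithZero H] [IsCancelMulZero H] (r : IdealSystem H) : Prop :=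
  ∀ X : Set H, r.toFun X = ⋃ E ∈ {E : Set H | E ⊆ X ∧ E.Finite}, r.toFun E

/-- The set `I_r(H)` of all `r`-ideals of `H`. -/
def RIdeals {H : Type*} [CommMonoidWithZero H] [IsCancelMulZero H] (r : IdealSystem H) : Type _ :=
  {I : Set H // ∃ X : Set H, I = r.toFun X}

/-- The Zariski topology on `I_r(H)`, generated by the sets `U_r(x) = {I | x ∉ I}`. -/
instance {H : Type*} [CommMonoidWithZero H] [IsCancelMulZero H] (r : IdealSystem H) :
    TopologicalSpace (RIdeals r) :=
  TopologicalSpace.generateFrom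
    {U : Set (RIdeals r) | ∃ x : H, U = {I | x ∉ I.1}}

/-! Since `𝒰` is an ultrafilter, `U_r(y) ∉ 𝒰` means that `y ∈ I` for `𝒰`-almost all `I`, and this
description makes sense for any filter. If `y ∈ X_r` with `X` the set of such elements, then by
finitarity `y ∈ E_r` for a finite `E ⊆ X`; as filters are closed under finite intersections, almost
all `I` contain `E`, hence `E_r`, hence `y`. -/

namespace RIdeals

variable {H : Type*} [CommMonoidWithZero H] [IsCancelMulZero H] {r : IdealSystem H}

theorem toFun_subset (I : RIdeals r) {E : Set H} (hE : E ⊆ I.1) : r.toFun E ⊆ I.1 := by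
  obtain ⟨X, hX⟩ := I.2
  rw [hX] at hE ⊢
  exact r.id2 E X hE

end RIdeals

namespace IdealSystem

variable {H : Type*} [CommMonoidWithZero H] [IsCancelMulZero H] {r : IdealSystem H}

theorem Finitary.toFun_setOf_eventually_mem (hr : r.Finitary) (F : Filter (RIdeals r)) :
    r.toFun {y : H | ∀ᶠ I in F, y ∈ I.1} = {y : H | ∀ᶠ I in F, y ∈ I.1} := by
  refine Set.Subset.antisymm ?_ fun y hy => r.id1 _ (Or.inl hy)
  intro y hy
  rw [hr] at hy
  simp only [Set.mem_iUnion] at hy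
  obtain ⟨E, ⟨hES, hEfin⟩, hyE⟩ := hy
  have hE : ∀ᶠ I in F, E ⊆ I.1 := (Filter.eventually_all_finite hEfin).mpr hES
  exact hE.mono fun I hEI => I.toFun_subset hEI hyE

end IdealSystem

theorem ultrafilter_limit_is_rIdeal_general {H : Type*} [CommMonoidWithZero H] [IsCancelMulZero H]
    (r : IdealSystem H) (hr : r.Finitary) (𝒰 : Ultrafilter (RIdeals r)) :
    r.toFun {y : H | {I : RIdeals r | y ∉ I.1} ∉ 𝒰} =
      {y : H | {I : RIdeals r | y ∉ I.1} ∉ 𝒰} := by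
  have hlimit : {y : H | {I : RIdeals r | y ∉ I.1} ∉ 𝒰} =
      {y : H | ∀ᶠ I in (𝒰 : Filter (RIdeals r)), y ∈ I.1} := by
    ext y
    rw [Set.mem_ofPred_eq, ← Ultrafilter.compl_mem_iff_notMem, Set.compl_ofPred]
    simp only [not_not]
    rfl
  rw [hlimit]
  exact hr.toFun_setOf_eventually_mem (𝒰 : Filter (RIdeals r))

theorem ultrafilter_limit_is_rIdeal {H : Type*} [CommMonoidWithZero H] [IsCancelMulZero H] [Nontrivial H]
    (r : IdealSystem H) (hr : r.Finitary) (𝒰 : Ultrafilter (RIdeals r)) :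
    r.toFun {y : H | {I : RIdeals r | y ∉ I.1} ∉ 𝒰} =
      {y : H | {I : RIdeals r | y ∉ I.1} ∉ 𝒰} :=
  ultrafilter_limit_is_rIdeal_general r hr 𝒰
end

section
/- Let H be a cancellative commutative monoid with zero (1 ≠ 0) with quotient groupoid G, and let 𝒰 be an ultrafilter on 𝒳. Then the map r_𝒰 : 𝒫(G) → 𝒫(G) defined by A ↦ {g ∈ G : U_{A,g} ∈ 𝒰} is a generalized H-module system on G, and for every A ⊆ G and x ∈ G one has r_𝒰 ∈ U_{A,x} if and only if U_{A,x} ∈ 𝒰. -/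
open Set Topology

variable (G : Type*) [CommGroupWithZero G]

/-- A generalized `H`-module system on `G`. -/
structure ModuleSystem (H : Submonoid G) where
  toFun : Set G → Set G
  id1 : ∀ A : Set G, A ∪ {0} ⊆ toFun A
  m2 : ∀ A B : Set G, A ⊆ B → toFun A ⊆ toFun B
  id3 : ∀ (c : G) (A : Set G), (fun x => c * x) '' toFun A = toFun ((fun x => c * x) '' A)
  m4 : ∀ A : Set G, Set.image2 (· * ·) (H : Set G) (toFun A) = toFun A

/-- The Zariski topology on the set `𝒳` of all generalized `H`-module systems on `G`,
generated by the sets `U_{A,x} = {r | x ∈ A_r}`. -/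
instance (H : Submonoid G) : TopologicalSpace (ModuleSystem G H) :=
  TopologicalSpace.generateFrom
    {U : Set (ModuleSystem G H) | ∃ (A : Set G) (x : G), U = {r | x ∈ r.toFun A}}

/-! Each axiom of a module system is a statement about individual elements of the sets `A_r`,
so it passes to the system whose `A`-part consists of the `x` with `x ∈ A_s` for `𝒰`-almost all
`s`: for `c ≠ 0`, `(Id3)` reads `x ∈ (cA)_r ↔ c⁻¹x ∈ A_r`. Only `(Id3)` with `c = 0`, which says
`(0·A)_r = {0}`, needs `𝒰` to be proper. -/

section

variable {G}

lemma mem_image_mul_left_iff₀ {c : G} (hc : c ≠ 0) (S : Set G) (x : G) :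
    x ∈ (c * ·) '' S ↔ c⁻¹ * x ∈ S :=
  mem_smul_set_iff_inv_smul_mem₀ hc S x

lemma image_zero_mul_of_nonempty {S : Set G} (hS : S.Nonempty) : (0 * ·) '' S = {0} := by
  simpa only [zero_mul] using hS.image_const 0

namespace ModuleSystem

variable {H : Submonoid G}

lemma zero_mem (r : ModuleSystem G H) (A : Set G) : (0 : G) ∈ r.toFun A :=
  r.id1 A (Or.inr rfl)

lemma mul_mem (r : ModuleSystem G H) {A : Set G} {h y : G} (hh : h ∈ H)
    (hy : y ∈ r.toFun A) : h * y ∈ r.toFun A :=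
  r.m4 A ▸ Set.mem_image2_of_mem hh hy

lemma mem_toFun_image_mul_left_iff (r : ModuleSystem G H) {c : G} (hc : c ≠ 0) (A : Set G)
    (x : G) : x ∈ r.toFun ((c * ·) '' A) ↔ c⁻¹ * x ∈ r.toFun A := by
  rw [← r.id3, mem_image_mul_left_iff₀ hc]

lemma toFun_image_zero_mul (r : ModuleSystem G H) (A : Set G) :
    r.toFun ((0 * ·) '' A) = {0} := by
  rw [← r.id3, image_zero_mul_of_nonempty ⟨0, r.zero_mem A⟩]

def limit (l : Filter (ModuleSystem G H)) [l.NeBot] : ModuleSystem G H where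
  toFun A := {x | ∀ᶠ s in l, x ∈ s.toFun A}
  id1 A _ hx := Filter.Eventually.of_forall fun s => s.id1 A hx
  m2 A B hAB _ hx := hx.mono fun s hs => s.m2 A B hAB hs
  id3 c A := by
    ext x
    rcases eq_or_ne c 0 with rfl | hc
    · rw [image_zero_mul_of_nonempty]
      · simp only [toFun_image_zero_mul, Set.mem_singleton_iff, Filter.eventually_const,
          Set.mem_ofPred_eq]
      · exact ⟨0, Filter.Eventually.of_forall fun s => s.zero_mem A⟩
    · simp only [mem_image_mul_left_iff₀ hc, Set.mem_ofPred_eq,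
        mem_toFun_image_mul_left_iff _ hc]
  m4 A := by
    ext x
    refine ⟨?_, fun hx => ⟨1, H.one_mem, x, hx, one_mul x⟩⟩
    rintro ⟨h, hh, y, hy, rfl⟩
    exact hy.mono fun s hs => s.mul_mem hh hs

lemma mem_limit_toFun_iff (l : Filter (ModuleSystem G H)) [l.NeBot] (A : Set G) (x : G) :
    x ∈ (limit l).toFun A ↔ {s : ModuleSystem G H | x ∈ s.toFun A} ∈ l :=
  Iff.rfl

end ModuleSystem

end

theorem ultrafilter_limit_is_moduleSystem (H : Submonoid G)
    (𝒰 : Ultrafilter (ModuleSystem G H)) :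
    ∃ r : ModuleSystem G H, ∀ (A : Set G) (x : G),
      x ∈ r.toFun A ↔ {s : ModuleSystem G H | x ∈ s.toFun A} ∈ 𝒰 :=
  ⟨ModuleSystem.limit (𝒰 : Filter (ModuleSystem G H)), ModuleSystem.mem_limit_toFun_iff _⟩
end

section
/- Let H be a cancellative commutative monoid with zero (1 ≠ 0) with quotient groupoid G, and let Δ ⊆ R(G|H) be any subset of the set of overmonoids of H. Then Δ is quasi-compact in the subspace topology induced from R(G|H) if and only if the map r_Δ : A ↦ ⋂_{S ∈ Δ} S·A is finitary, i.e. ⋂_{S ∈ Δ} S·A = ⋃{⋂_{S ∈ Δ} S·E : E a finite subset of A} for every A ⊆ G. -/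
open Set Topology

variable (G : Type*) [CommGroupWithZero G]

/-- The set `R(G|H)` of all overmonoids of `H` in `G`. -/
def Overmonoids (H : Submonoid G) : Type _ :=
  {S : Submonoid G // H ≤ S}

/-- The Zariski topology on `R(G|H)`, generated by the sets `U(x) = {S | x ∈ S}`. -/
instance (H : Submonoid G) : TopologicalSpace (Overmonoids G H) :=
  TopologicalSpace.generateFrom
    {U : Set (Overmonoids G H) | ∃ x : G, U = {S | x ∈ S.1}}

/-! For `x ≠ 0` we have `x ∈ S·A` iff `x a⁻¹ ∈ S` for some nonzero `a ∈ A`, so `x ∈ r_Δ(A)` says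
precisely that the basic open sets `U(x a⁻¹)`, `a ∈ A ∖ {0}`, cover `Δ`, and `x ∈ r_Δ(E)` for a
finite `E ⊆ A` is a finite subcover. Compactness therefore gives finitarity. Conversely, by
Alexander's subbasis theorem it suffices to refine covers of `Δ` by sets `U(x)`, `x ∈ X`, and for
`0 ∉ X` such a cover is the statement `1 ∈ r_Δ(X⁻¹)`. The element `0` causes no trouble because it
lies in `H`, hence in every overmonoid. -/

open scoped Pointwise

variable {G}

def IsFinitary {α : Type*} (r : Set α → Set α) : Prop :=
  ∀ A : Set α, r A = ⋃ E ∈ {E : Set α | E ⊆ A ∧ E.Finite}, r E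

theorem Set.mem_mul_iff_of_ne_zero {M : Type*} [GroupWithZero M] {S A : Set M} {x : M}
    (hx : x ≠ 0) :
    x ∈ S * A ↔ ∃ a ∈ A \ {0}, x * a⁻¹ ∈ S := by
  constructor
  · rintro ⟨s, hs, a, ha, rfl⟩
    have ha0 : a ≠ 0 := by rintro rfl; exact hx (mul_zero s)
    exact ⟨a, ⟨ha, ha0⟩, by rwa [mul_inv_cancel_right₀ ha0]⟩
  · rintro ⟨a, ⟨ha, ha0⟩, hs⟩
    exact ⟨x * a⁻¹, hs, a, ha, inv_mul_cancel_right₀ ha0 x⟩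

namespace Overmonoids

variable {H : Submonoid G}

/-- The subbasic open set `U(x)`. -/
def basicOpen (H : Submonoid G) (x : G) : Set (Overmonoids G H) :=
  {S | x ∈ S.1}

theorem isOpen_basicOpen (x : G) : IsOpen (basicOpen H x) :=
  TopologicalSpace.isOpen_generateFrom_of_mem ⟨x, rfl⟩

theorem basicOpen_zero (h0 : (0 : G) ∈ H) : basicOpen H 0 = univ :=
  eq_univ_of_forall fun S => S.2 h0

theorem isCompact_iff_finite_subcover {Δ : Set (Overmonoids G H)} :
    IsCompact Δ ↔ ∀ X : Set G, Δ ⊆ ⋃ x ∈ X, basicOpen H x →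
      ∃ Y ⊆ X, Y.Finite ∧ Δ ⊆ ⋃ x ∈ Y, basicOpen H x := by
  refine ⟨fun hΔ X hX => hΔ.elim_finite_subcover_image (fun x _ => isOpen_basicOpen x) hX,
    fun h => isCompact_generateFrom rfl fun P hP hΔ => ?_⟩
  obtain ⟨Y, hYX, hY, hΔY⟩ := h {x | basicOpen H x ∈ P} fun S hS => by
    obtain ⟨U, hUP, hSU⟩ := hΔ hS
    obtain ⟨x, rfl⟩ := hP hUP
    exact mem_biUnion (x := x) hUP hSU
  refine ⟨basicOpen H '' Y, image_subset_iff.2 hYX, hY.image _, ?_⟩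
  rwa [sUnion_image]

/-- The map `r_Δ : A ↦ ⋂_{S ∈ Δ} S·A`. -/
def interMul (Δ : Set (Overmonoids G H)) (A : Set G) : Set G :=
  ⋂ S ∈ Δ, (S.1 : Set G) * A

variable {Δ : Set (Overmonoids G H)}

theorem interMul_mono {A B : Set G} (hAB : A ⊆ B) : interMul Δ A ⊆ interMul Δ B :=
  biInter_mono subset_rfl fun _ _ => mul_subset_mul_left hAB

theorem zero_mem_interMul_singleton (h0 : (0 : G) ∈ H) (a : G) : 0 ∈ interMul Δ {a} :=
  mem_iInter₂.2 fun S _ => ⟨0, S.2 h0, a, rfl, zero_mul a⟩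

theorem mem_interMul_iff_subset_iUnion {A : Set G} {x : G} (hx : x ≠ 0) :
    x ∈ interMul Δ A ↔ Δ ⊆ ⋃ a ∈ A \ {0}, basicOpen H (x * a⁻¹) := by
  simp only [interMul, mem_iInter₂, Set.mem_mul_iff_of_ne_zero hx, subset_def, mem_iUnion₂,
    basicOpen, mem_ofPred_eq, exists_prop, SetLike.mem_coe]

theorem isFinitary_interMul_of_isCompact (h0 : (0 : G) ∈ H) (hΔ : IsCompact Δ) :
    IsFinitary (interMul Δ) := by
  intro A
  refine (iUnion₂_subset fun E hE => interMul_mono hE.1).antisymm' fun x hx => ?_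
  rcases eq_or_ne x 0 with rfl | hx0
  · rcases A.eq_empty_or_nonempty with rfl | ⟨a, ha⟩
    · exact mem_biUnion ⟨subset_rfl, finite_empty⟩ hx
    · exact mem_biUnion ⟨singleton_subset_iff.2 ha, finite_singleton a⟩
        (zero_mem_interMul_singleton h0 a)
  · obtain ⟨E, hEA, hE, hΔE⟩ := hΔ.elim_finite_subcover_image
      (fun a _ => isOpen_basicOpen (x * a⁻¹)) ((mem_interMul_iff_subset_iUnion hx0).1 hx)
    refine mem_biUnion ⟨hEA.trans sdiff_subset, hE⟩ ((mem_interMul_iff_subset_iUnion hx0).2 ?_)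
    rwa [sdiff_singleton_eq_self fun h => (hEA h).2 rfl]

theorem isCompact_of_isFinitary_interMul (h0 : (0 : G) ∈ H) (hfin : IsFinitary (interMul Δ)) :
    IsCompact Δ := by
  refine isCompact_iff_finite_subcover.2 fun X hX => ?_
  by_cases hX0 : (0 : G) ∈ X
  · exact ⟨{0}, singleton_subset_iff.2 hX0, finite_singleton 0, by simp [basicOpen_zero h0]⟩
  have hX' : Δ ⊆ ⋃ a ∈ X⁻¹ \ {0}, basicOpen H (1 * a⁻¹) := fun S hS => by
    obtain ⟨x, hxX, hSx⟩ := mem_iUnion₂.1 (hX hS)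
    have hx0 : x ≠ 0 := fun h => hX0 (h ▸ hxX)
    exact mem_iUnion₂.2 ⟨x⁻¹, ⟨by rwa [mem_inv, inv_inv], inv_ne_zero hx0⟩,
      by rwa [one_mul, inv_inv]⟩
  have hone := hfin X⁻¹ ▸ (mem_interMul_iff_subset_iUnion one_ne_zero).2 hX'
  obtain ⟨E, ⟨hEX, hE⟩, honeE⟩ := mem_iUnion₂.1 hone
  refine ⟨E⁻¹, inv_subset.2 hEX, hE.inv, fun S hS => ?_⟩
  obtain ⟨a, ⟨haE, -⟩, hSa⟩ :=
    mem_iUnion₂.1 ((mem_interMul_iff_subset_iUnion one_ne_zero).1 honeE hS)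
  exact mem_iUnion₂.2 ⟨a⁻¹, inv_mem_inv.2 haE, by rwa [one_mul] at hSa⟩

end Overmonoids

theorem compact_iff_finitary_general (H : Submonoid G) (h0 : (0 : G) ∈ H)
    (Δ : Set (Overmonoids G H)) :
    IsCompact Δ ↔
      ∀ A : Set G,
        (⋂ S ∈ Δ, Set.image2 (· * ·) (S.1 : Set G) A) =
          ⋃ E ∈ {E : Set G | E ⊆ A ∧ E.Finite},
            ⋂ S ∈ Δ, Set.image2 (· * ·) (S.1 : Set G) E :=
  ⟨Overmonoids.isFinitary_interMul_of_isCompact h0,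
    Overmonoids.isCompact_of_isFinitary_interMul h0⟩

theorem compact_iff_finitary (H : Submonoid G) (h0 : (0 : G) ∈ H)
    (hq : IsQuotientGroupoid G H) (Δ : Set (Overmonoids G H)) :
    IsCompact Δ ↔
      ∀ A : Set G,
        (⋂ S ∈ Δ, Set.image2 (· * ·) (S.1 : Set G) A) =
          ⋃ E ∈ {E : Set G | E ⊆ A ∧ E.Finite},
            ⋂ S ∈ Δ, Set.image2 (· * ·) (S.1 : Set G) E :=
  compact_iff_finitary_general H h0 Δ
end

section
/- Let H be a cancellative commutative monoid with zero (1 ≠ 0) with quotient groupoid G, and let Δ = {H_P : P ∈ s-spec(H)} be the collection of localizations of H at its prime s-ideals. Then r_Δ is finitary: for every A ⊆ G, ⋂_{S ∈ Δ} S·A = ⋃{⋂_{S ∈ Δ} S·E : E a finite subset of A}. -/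
/-!
The non-units `M` of `H` form a prime `s`-ideal containing every other one, so `H_M ⊆ H_P` for
all `P` and `r_Δ(A) = H_M · A`. A point `s * y` of `H_M · A` already lies in `r_Δ({y})`.
-/

open Set Topology

variable (G : Type*) [CommGroupWithZero G]

/-- The localization of `H` at (the complement of) a prime `s`-ideal `P`:
`H_P = {a * s⁻¹ : a ∈ H, s ∈ H \\ P}`. -/
def sLocalization (H : Submonoid G) (P : Set G) : Set G :=
  {g : G | ∃ a ∈ H, ∃ s ∈ H, s ∉ P ∧ g = a * s⁻¹}

theorem Set.iInter_image2_eq_biUnion_finite {ι α β γ : Type*} (f : α → β → γ)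
    (S : ι → Set α) (i₀ : ι) (hmin : ∀ i, S i₀ ⊆ S i) (A : Set β) :
    ⋂ i, image2 f (S i) A = ⋃ E ∈ {E : Set β | E ⊆ A ∧ E.Finite}, ⋂ i, image2 f (S i) E := by
  refine Subset.antisymm (fun x hx => ?_) (iUnion₂_subset fun E hE => iInter_mono fun i =>
    image2_subset_left hE.1)
  obtain ⟨s, hs, y, hy, rfl⟩ := mem_iInter.1 hx i₀
  exact mem_biUnion ⟨singleton_subset_iff.2 hy, finite_singleton y⟩
    (mem_iInter.2 fun i => mem_image2_of_mem (hmin i hs) rfl)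

section
variable {G}

def sNonunits (H : Submonoid G) : Set G :=
  {h : G | h ∈ H ∧ ¬∃ h' ∈ H, h * h' = 1}

theorem isPrimeSIdeal_sNonunits {H : Submonoid G} (h0 : (0 : G) ∈ H) :
    IsPrimeSIdeal G H (sNonunits H) := by
  refine ⟨fun h hh => hh.1, fun heq => ?_, ⟨h0, ?_⟩, ?_, ?_⟩
  · have h1 : (1 : G) ∈ sNonunits H := heq ▸ H.one_mem
    exact h1.2 ⟨1, H.one_mem, one_mul 1⟩
  · rintro ⟨h', -, hh'⟩
    exact zero_ne_one (zero_mul h' ▸ hh')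
  · rintro p ⟨hpH, hp⟩ h hh
    refine ⟨H.mul_mem hpH hh, fun ⟨k, hk, hpk⟩ => hp ⟨h * k, H.mul_mem hh hk, ?_⟩⟩
    rwa [← mul_assoc]
  · intro a ha b hb hab
    by_contra! hunits
    obtain ⟨a', ha', haa'⟩ := not_not.1 fun h => hunits.1 ⟨ha, h⟩
    obtain ⟨b', hb', hbb'⟩ := not_not.1 fun h => hunits.2 ⟨hb, h⟩
    exact hab.2 ⟨a' * b', H.mul_mem ha' hb', by rw [mul_mul_mul_comm, haa', hbb', one_mul]⟩

theorem IsPrimeSIdeal.subset_sNonunits {H : Submonoid G} {P : Set G}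
    (hP : IsPrimeSIdeal G H P) : P ⊆ sNonunits H := by
  obtain ⟨hsub, hne, -, hideal, -⟩ := hP
  refine fun s hs => ⟨hsub hs, fun ⟨s', hs', hss'⟩ => hne (Subset.antisymm hsub fun h hh => ?_)⟩
  have h1 : (1 : G) ∈ P := hss' ▸ hideal s hs s' hs'
  simpa only [one_mul] using hideal 1 h1 h hh

theorem sLocalization_anti {H : Submonoid G} {P Q : Set G} (hPQ : P ⊆ Q) :
    sLocalization G H Q ⊆ sLocalization G H P :=
  fun _ ⟨a, ha, s, hs, hsQ, hg⟩ => ⟨a, ha, s, hs, fun hsP => hsQ (hPQ hsP), hg⟩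

end

theorem rDelta_localizations_finitary (H : Submonoid G) (h0 : (0 : G) ∈ H)
    (A : Set G) :
    (⋂ P : sSpec G H, Set.image2 (· * ·) (sLocalization G H P.1) A) =
      ⋃ E ∈ {E : Set G | E ⊆ A ∧ E.Finite},
        ⋂ P : sSpec G H, Set.image2 (· * ·) (sLocalization G H P.1) E :=
  Set.iInter_image2_eq_biUnion_finite _ (fun P : sSpec G H => sLocalization G H P.1)
    ⟨sNonunits H, isPrimeSIdeal_sNonunits h0⟩
    (fun P => sLocalization_anti P.2.subset_sNonunits) A
end

section
/- Let H be a cancellative commutative monoid with zero (1 ≠ 0) with quotient groupoid G, and let Δ = Zar(G|H) be the set of all valuation submonoids of G containing H. Then r_Δ is finitary: for every A ⊆ G, ⋂_{S ∈ Δ} S·A = ⋃{⋂_{S ∈ Δ} S·E : E a finite subset of A}. -/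
open Set Topology

variable (G : Type*) [CommGroupWithZero G]

/-!
The Riemann–Zariski space is closed under ultralimits: if `(V i)` are valuation submonoids
containing `H` and `𝒰` is an ultrafilter, then `{x | x ∈ V i for 𝒰-many i}` is again one.
If `g ∈ V·A` for all `V` but `g ∉ V_E·E` for some `V_E`, for every finite `E ⊆ A`, take the
ultralimit `W` of the `V_E` along an ultrafilter finer than `atTop` on finite subsets of `A`.
Writing `g = w * a` with `w ∈ W`, `a ∈ A`, some `E` has both `w ∈ V_E` and `a ∈ E`,
contradicting the choice of `V_E`.
-/

open Filter

namespace Submonoid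

variable {M ι : Type*} [Monoid M]

def filterLim (l : Filter ι) (V : ι → Submonoid M) : Submonoid M where
  carrier := {x | ∀ᶠ i in l, x ∈ V i}
  one_mem' := Eventually.of_forall fun i => (V i).one_mem
  mul_mem' := fun hx hy => (hx.and hy).mono fun i h => (V i).mul_mem h.1 h.2

variable {l : Filter ι} {V : ι → Submonoid M}

@[simp]
theorem mem_filterLim {x : M} : x ∈ filterLim l V ↔ ∀ᶠ i in l, x ∈ V i :=
  Iff.rfl

theorem le_filterLim {H : Submonoid M} (hH : ∀ᶠ i in l, H ≤ V i) : H ≤ filterLim l V :=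
  fun _ hx => hH.mono fun _ hi => hi hx

end Submonoid

section

variable {G} {ι : Type*}

theorem IsValSubmonoid.filterLim (𝒰 : Ultrafilter ι) {V : ι → Submonoid G}
    (hV : ∀ i, IsValSubmonoid G (V i)) : IsValSubmonoid G (Submonoid.filterLim ↑𝒰 V) :=
  ⟨Eventually.of_forall fun i => (hV i).1, fun x hx =>
    Ultrafilter.eventually_or.mp (Eventually.of_forall fun i => (hV i).2 x hx)⟩

namespace Zar

variable {H : Submonoid G}

def ultraLim (𝒰 : Ultrafilter ι) (V : ι → Zar G H) : Zar G H :=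
  ⟨Submonoid.filterLim ↑𝒰 fun i => (V i).1, IsValSubmonoid.filterLim 𝒰 fun i => (V i).2.1,
    Submonoid.le_filterLim (Eventually.of_forall fun i => (V i).2.2)⟩

theorem exists_finite_of_mem_iInter_image2 {A : Set G} {g : G}
    (hg : g ∈ ⋂ V : Zar G H, image2 (· * ·) (V.1 : Set G) A) :
    ∃ E ⊆ A, E.Finite ∧ g ∈ ⋂ V : Zar G H, image2 (· * ·) (V.1 : Set G) E := by
  by_contra! hfin
  have hwitness : ∀ E : Finset A, ∃ V : Zar G H,
      g ∉ image2 (· * ·) (V.1 : Set G) (Subtype.val '' (E : Set A)) := fun E => by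
    simpa using hfin _ (Subtype.coe_image_subset A E) (E.finite_toSet.image _)
  choose V hV using hwitness
  let 𝒰 : Ultrafilter (Finset A) := Ultrafilter.of atTop
  obtain ⟨w, hw, a, ha, rfl⟩ := mem_iInter.mp hg (ultraLim 𝒰 V)
  have ha_mem : ∀ᶠ E in (𝒰 : Filter (Finset A)), (⟨a, ha⟩ : A) ∈ E :=
    Ultrafilter.of_le atTop <|
      (eventually_ge_atTop {⟨a, ha⟩}).mono fun _ => Finset.singleton_subset_iff.mp
  obtain ⟨E, hwE, haE⟩ := (Submonoid.mem_filterLim.mp hw |>.and ha_mem).exists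
  exact hV E ⟨w, hwE, a, ⟨_, haE, rfl⟩, rfl⟩

end Zar

end

theorem rDelta_zar_finitary (H : Submonoid G) (A : Set G) :
    (⋂ V : Zar G H, Set.image2 (· * ·) (V.1 : Set G) A) =
      ⋃ E ∈ {E : Set G | E ⊆ A ∧ E.Finite},
        ⋂ V : Zar G H, Set.image2 (· * ·) (V.1 : Set G) E := by
  refine subset_antisymm (fun g hg => ?_) (iUnion₂_subset fun E hE => ?_)
  · obtain ⟨E, hEA, hE, hgE⟩ := Zar.exists_finite_of_mem_iInter_image2 hg
    exact mem_biUnion ⟨hEA, hE⟩ hgE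
  · exact iInter_mono fun V => image2_subset_left hE.1
end

section
/- Let H be a cancellative commutative monoid with zero (1 ≠ 0) with quotient groupoid G. The natural map ι : R(G|H) → 𝒳 sending an overmonoid S to the generalized H-module system r_{{S}} : A ↦ S·A is a topological embedding: it is injective, continuous, and a homeomorphism onto its image, where R(G|H) and 𝒳 carry their Zariski topologies. -/
/-!
`S` is recovered from `r_{S}` as `{1}_r = S`, so `ι` is injective and the subbasic open `U(x)` is
the preimage of `U_{{1},x}`. Conversely, `x ∈ S·a` holds iff `x·a⁻¹ ∈ S` when `a ≠ 0`, and iff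
`x = 0` when `a = 0`; hence the preimage of `U_{A,x}` is a union of sets `U(x·a⁻¹)` and constant
sets, so `ι` is continuous.
-/

open Set Topology

variable (G : Type*) [CommGroupWithZero G]

open scoped Pointwise

namespace Submonoid

variable {G} {H : Submonoid G}

lemma coe_mul_eq_of_le {S : Submonoid G} (hHS : H ≤ S) : (H : Set G) * S = S :=
  ((Set.mul_subset_mul_right hHS).trans_eq S.coe_mul_self_eq).antisymm
    (Set.subset_mul_right _ H.one_mem)

/-- `A ↦ S * A` itself violates `Id1` at `A = ∅`; adjoining `0` to the argument repairs this and
changes nothing on nonempty `A` once `0 ∈ S`. -/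
def moduleSystem (S : Submonoid G) (hHS : H ≤ S) : ModuleSystem G H where
  toFun A := (S : Set G) * insert 0 A
  id1 A := by
    rw [Set.union_singleton]
    exact Set.subset_mul_right _ S.one_mem
  m2 A B hAB := Set.mul_subset_mul_left (Set.insert_subset_insert hAB)
  id3 c A := by
    change c • ((S : Set G) * insert 0 A) = (S : Set G) * insert 0 (c • A)
    rw [← mul_smul_comm, Set.smul_set_insert, smul_zero]
  m4 A := by
    change (H : Set G) * ((S : Set G) * insert 0 A) = _
    rw [← mul_assoc, coe_mul_eq_of_le hHS]

variable {S : Submonoid G} (hHS : H ≤ S)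

lemma moduleSystem_apply (A : Set G) : (moduleSystem S hHS).toFun A = (S : Set G) * insert 0 A :=
  rfl

lemma moduleSystem_apply_of_nonempty (h0 : (0 : G) ∈ H) {A : Set G} (hA : A.Nonempty) :
    (moduleSystem S hHS).toFun A = (S : Set G) * A := by
  obtain ⟨a, ha⟩ := hA
  have h0A : (0 : G) ∈ (S : Set G) * A := ⟨0, hHS h0, a, ha, zero_mul a⟩
  rw [moduleSystem_apply, Set.insert_eq, Set.mul_union, Set.union_eq_right]
  exact (Set.mul_zero_subset _).trans (Set.singleton_subset_iff.2 h0A)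

lemma moduleSystem_apply_one (h0 : (0 : G) ∈ H) : (moduleSystem S hHS).toFun {1} = S := by
  rw [moduleSystem_apply_of_nonempty hHS h0 (Set.singleton_nonempty 1), Set.singleton_one, mul_one]

end Submonoid

namespace Overmonoids

variable {G} {H : Submonoid G}

def toModuleSystem (S : Overmonoids G H) : ModuleSystem G H :=
  Submonoid.moduleSystem S.1 S.2

lemma toModuleSystem_injective (h0 : (0 : G) ∈ H) :
    Function.Injective (toModuleSystem : Overmonoids G H → ModuleSystem G H) := by
  intro S T hST
  have h : (S.1 : Set G) = T.1 := by
    rw [← Submonoid.moduleSystem_apply_one S.2 h0, ← Submonoid.moduleSystem_apply_one T.2 h0]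
    exact congrArg (ModuleSystem.toFun · {1}) hST
  exact Subtype.ext (SetLike.coe_injective h)

lemma isOpen_setOf_mem_mul_singleton (x b : G) :
    IsOpen {S : Overmonoids G H | x ∈ (S.1 : Set G) * {b}} := by
  simp only [Set.mul_singleton]
  by_cases hb : b = 0
  · have h : ∀ S : Overmonoids G H, x ∈ (· * b) '' (S.1 : Set G) ↔ x = 0 := fun S =>
      ⟨by rintro ⟨s, -, rfl⟩; exact mul_eq_zero_of_right s hb,
        fun hx => ⟨1, S.1.one_mem, by simp [hb, hx]⟩⟩
    simp only [h]
    exact isOpen_const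
  · have h : ∀ S : Overmonoids G H, x ∈ (· * b) '' (S.1 : Set G) ↔ x * b⁻¹ ∈ S.1 := fun S =>
      ⟨by rintro ⟨s, hs, rfl⟩; rwa [mul_inv_cancel_right₀ hb],
        fun hx => ⟨_, hx, inv_mul_cancel_right₀ hb x⟩⟩
    simp only [h]
    exact TopologicalSpace.isOpen_generateFrom_of_mem ⟨x * b⁻¹, rfl⟩

lemma isOpen_setOf_mem_mul (x : G) (B : Set G) :
    IsOpen {S : Overmonoids G H | x ∈ (S.1 : Set G) * B} := by
  have h : {S : Overmonoids G H | x ∈ (S.1 : Set G) * B} =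
      ⋃ b ∈ B, {S : Overmonoids G H | x ∈ (S.1 : Set G) * {b}} := by
    ext S
    simp only [Set.mem_ofPred_eq, Set.mem_iUnion, Set.mem_mul, Set.mem_singleton_iff, exists_eq_left]
    tauto
  rw [h]
  exact isOpen_biUnion fun b _ => isOpen_setOf_mem_mul_singleton x b

lemma continuous_toModuleSystem :
    Continuous (toModuleSystem : Overmonoids G H → ModuleSystem G H) := by
  refine continuous_generateFrom_iff.2 ?_
  rintro _ ⟨A, x, rfl⟩
  exact isOpen_setOf_mem_mul x (insert 0 A)

lemma isEmbedding_toModuleSystem (h0 : (0 : G) ∈ H) :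
    IsEmbedding (toModuleSystem : Overmonoids G H → ModuleSystem G H) := by
  refine ⟨⟨continuous_toModuleSystem.le_induced.antisymm (le_generateFrom ?_)⟩,
    toModuleSystem_injective h0⟩
  rintro _ ⟨x, rfl⟩
  have h : {S : Overmonoids G H | x ∈ S.1} = toModuleSystem ⁻¹' {r | x ∈ r.toFun {1}} := by
    ext S
    exact (Set.ext_iff.1 (Submonoid.moduleSystem_apply_one S.2 h0) x).symm
  rw [h]
  exact isOpen_induced (TopologicalSpace.isOpen_generateFrom_of_mem ⟨{1}, x, rfl⟩)

end Overmonoids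

theorem overmonoids_embed_in_moduleSystems (H : Submonoid G) (h0 : (0 : G) ∈ H) :
    ∃ ι : Overmonoids G H → ModuleSystem G H,
      (∀ (S : Overmonoids G H) (A : Set G), A.Nonempty →
        (ι S).toFun A = Set.image2 (· * ·) (S.1 : Set G) A) ∧
      Function.Injective ι ∧ IsEmbedding ι :=
  ⟨Overmonoids.toModuleSystem, fun S _ hA => Submonoid.moduleSystem_apply_of_nonempty S.2 h0 hA,
    Overmonoids.toModuleSystem_injective h0, Overmonoids.isEmbedding_toModuleSystem h0⟩
end
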